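/- Let k be a field and B ⊂ SL₅(k) the upper triangular Borel. Every element of the B-orbit (under conjugation) of e₂₃ ∈ sl₅(k) lies in the set of elements r·e₂₃ + u·e₁₃ + v·e₂₄ + x·e₁₄ + y·e₂₅ + z·e₁₅ with r ≠ 0, r·x − u·v = 0 and r·z − u·y = 0. -/

import Mathlib

open Matrix

def borelSubgroup (n : ℕ) (k : Type*) [Field k] : Set (Matrix (Fin n) (Fin n) k) :=
  {b | b.det = 1 ∧ ∀ i j : Fin n, j < i → b i j = 0}

def borelOrbit (n : ℕ) (k : Type*) [Field k] (x : Matrix (Fin n) (Fin n) k) :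
    Set (Matrix (Fin n) (Fin n) k) :=
  {m | ∃ b ∈ borelSubgroup n k, b * x * b⁻¹ = m}

/-! Conjugating a matrix unit gives a rank-one matrix: `b * e₂₃ * b⁻¹` is the outer product
of column 1 of `b` with row 2 of `b⁻¹` (indices of `Fin 5` start at 0). Since `b` and `b⁻¹`
are upper triangular, the column is supported on rows 0, 1 and the row on columns 2, 3, 4,
and the 2 × 2 minors vanish because the matrix has rank one. The pivot `b 1 1 * b⁻¹ 2 2` is
nonzero because the determinant of a triangular matrix is the product of its diagonal. -/

namespace Matrix

theorem mul_single_one_mul {l m n o R : Type*} [Fintype m] [Fintype n] [DecidableEq m]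
    [DecidableEq n] [CommSemiring R] (A : Matrix l m R) (B : Matrix n o R) (i : m) (j : n) :
    A * single i j (1 : R) * B = vecMulVec (A.col i) (B.row j) := by
  rw [single_eq_single_vecMulVec_single, mul_vecMulVec, vecMulVec_mul, mulVec_single_one,
    single_one_vecMul]

theorem IsUpperTriangular.apply_self_ne_zero {m R : Type*} [Fintype m] [LinearOrder m]
    [CommRing R] {M : Matrix m m R} (hM : M.IsUpperTriangular) (hdet : M.det ≠ 0) (i : m) :
    M i i ≠ 0 := fun hi =>
  hdet <| (det_of_isUpperTriangular hM).trans (Finset.prod_eq_zero (Finset.mem_univ i) hi)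

end Matrix

section Borel

variable {n : ℕ} {k : Type*} [Field k] {b : Matrix (Fin n) (Fin n) k}

theorem isUpperTriangular_of_mem_borelSubgroup (hb : b ∈ borelSubgroup n k) :
    b.IsUpperTriangular :=
  fun i j hij => hb.2 i j hij

theorem inv_mem_borelSubgroup (hb : b ∈ borelSubgroup n k) : b⁻¹ ∈ borelSubgroup n k := by
  have : Invertible b := invertibleOfIsUnitDet b (hb.1 ▸ isUnit_one)
  refine ⟨by simp [det_nonsing_inv, hb.1], fun i j hij => ?_⟩
  exact blockTriangular_inv_of_blockTriangular (isUpperTriangular_of_mem_borelSubgroup hb) hij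

theorem apply_self_ne_zero_of_mem_borelSubgroup (hb : b ∈ borelSubgroup n k) (i : Fin n) :
    b i i ≠ 0 :=
  (isUpperTriangular_of_mem_borelSubgroup hb).apply_self_ne_zero (by simp [hb.1]) i

end Borel

theorem vecMulVec_eq_sum_single_of_support {R : Type*} [Semiring R] {c w : Fin 5 → R}
    (hc : ∀ i, 1 < i → c i = 0) (hw : ∀ j, j < 2 → w j = 0) :
    vecMulVec c w =
      (c 1 * w 2) • single 1 2 1 + (c 0 * w 2) • single 0 2 1 +
      (c 1 * w 3) • single 1 3 1 + (c 0 * w 3) • single 0 3 1 +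
      (c 1 * w 4) • single 1 4 1 + (c 0 * w 4) • single 0 4 1 := by
  ext i j
  fin_cases i <;> fin_cases j <;> simp [vecMulVec_apply, hc, hw]

theorem sl5_orbit_e23_subset (k : Type*) [Field k] :
    borelOrbit 5 k (Matrix.single (1 : Fin 5) 2 (1 : k)) ⊆
      {m | ∃ r u v x y z : k, r ≠ 0 ∧ r * x - u * v = 0 ∧ r * z - u * y = 0 ∧
        m = r • Matrix.single (1 : Fin 5) 2 (1 : k) +
            u • Matrix.single (0 : Fin 5) 2 (1 : k) +
            v • Matrix.single (1 : Fin 5) 3 (1 : k) +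
            x • Matrix.single (0 : Fin 5) 3 (1 : k) +
            y • Matrix.single (1 : Fin 5) 4 (1 : k) +
            z • Matrix.single (0 : Fin 5) 4 (1 : k)} := by
  rintro _ ⟨b, hb, rfl⟩
  have hb' := inv_mem_borelSubgroup hb
  refine ⟨b 1 1 * b⁻¹ 2 2, b 0 1 * b⁻¹ 2 2, b 1 1 * b⁻¹ 2 3, b 0 1 * b⁻¹ 2 3,
    b 1 1 * b⁻¹ 2 4, b 0 1 * b⁻¹ 2 4, ?_, by ring, by ring, ?_⟩
  · exact mul_ne_zero (apply_self_ne_zero_of_mem_borelSubgroup hb 1)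
      (apply_self_ne_zero_of_mem_borelSubgroup hb' 2)
  · rw [mul_single_one_mul]
    exact vecMulVec_eq_sum_single_of_support
      (fun i hi => isUpperTriangular_of_mem_borelSubgroup hb hi)
      (fun j hj => isUpperTriangular_of_mem_borelSubgroup hb' hj)
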